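/- arXiv:1910.13870 — 3 statements merged into one kernel-verified Lean document; each statement's English description precedes it below -/
import Mathlib

section
/- Assume the mesh functions (u_h)_{h>0} converge uniformly on Ω̄ to a function u : Ω̄ → ℝ that is convex on Ω̄ and continuous on Ω̄. Let K be compact and U open with K ⊂ U ⊆ Ū ⊂ Ω. Then for every sequence h_k → 0, the set ∂u(K) \ (⋃_{n} ⋂_{k ≥ n} ∂Γ(u_{h_k})(U ∩ conv(N_{h_k}))) has d-dimensional Lebesgue measure zero, where ∂u(K) = ⋃_{x∈K} ∂u(x) (subdifferentials of u restricted to Ω). -/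
open Set MeasureTheory Filter Topology

noncomputable section

abbrev Euc (d : ℕ) := EuclideanSpace ℝ (Fin d)

/-- Subdifferential of `v` at `x` relative to the set `C`. -/
def subdiff {d : ℕ} (C : Set (Euc d)) (v : Euc d → ℝ) (x : Euc d) : Set (Euc d) :=
  {p | ∀ y ∈ C, v x + (inner ℝ p (y - x) : ℝ) ≤ v y}

/-- `⋃ x ∈ S, subdiff C v x`. -/
def subdiffSet {d : ℕ} (C : Set (Euc d)) (v : Euc d → ℝ) (S : Set (Euc d)) : Set (Euc d) :=
  ⋃ x ∈ S, subdiff C v x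

/-- The convex extension `ũ` of `u : Ω → ℝ` (may take the value `+∞`, hence `EReal`). -/
def extFun {d : ℕ} (Ω : Set (Euc d)) (u : Euc d → ℝ) (x : Euc d) : EReal :=
  ⨆ y ∈ Ω, ⨆ q ∈ subdiff Ω u y, ((u y + (inner ℝ q (x - y) : ℝ) : ℝ) : EReal)

/-- `χ_u(x)`: the subdifferential of the extension `ũ` at `x`. -/
def chiSub {d : ℕ} (Ω : Set (Euc d)) (u : Euc d → ℝ) (x : Euc d) : Set (Euc d) :=
  {p | ∀ z : Euc d, extFun Ω u x + (((inner ℝ p (z - x) : ℝ) : ℝ) : EReal) ≤ extFun Ω u z}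

def chiSubSet {d : ℕ} (Ω : Set (Euc d)) (u : Euc d → ℝ) (S : Set (Euc d)) : Set (Euc d) :=
  ⋃ x ∈ S, chiSub Ω u x

/-- The lattice `hℤ^d`. -/
def latt (d : ℕ) (h : ℝ) : Set (Euc d) := {x | ∀ i, ∃ m : ℤ, x i = m * h}

/-- `Ω_h = Ω ∩ hℤ^d`. -/
def meshΩ {d : ℕ} (Ω : Set (Euc d)) (h : ℝ) : Set (Euc d) := Ω ∩ latt d h

/-- An integer direction `e ∈ ℤ^d` as a vector of `ℝ^d`. -/
def intVec {d : ℕ} (e : Fin d → ℤ) : Euc d :=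
  (EuclideanSpace.equiv (Fin d) ℝ).symm (fun i => (e i : ℝ))

/-- `h^e_x = sup { r h : r ∈ [0,1], x + r h e ∈ closure Ω }`. -/
def hev {d : ℕ} (Ω : Set (Euc d)) (h : ℝ) (x : Euc d) (e : Fin d → ℤ) : ℝ :=
  sSup {t | ∃ r ∈ Icc (0:ℝ) 1, t = r * h ∧ x + (r * h) • intVec e ∈ closure Ω}

/-- The boundary nodes `∂Ω_h` for the direction set `V`. -/
def meshBd {d : ℕ} (Ω : Set (Euc d)) (h : ℝ) (V : Set (Fin d → ℤ)) : Set (Euc d) :=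
  {x ∈ frontier Ω | ∃ y ∈ meshΩ Ω h, ∃ e ∈ V, x = y + hev Ω h y e • intVec e}

/-- The convex envelope of `u` with constraints on `N`:
`Γ(u)(x) = sup {L x : L affine, L ≤ u on N}`. -/
def convEnv {d : ℕ} (N : Set (Euc d)) (u : Euc d → ℝ) (x : Euc d) : ℝ :=
  sSup {t | ∃ (p : Euc d) (c : ℝ),
    (∀ y ∈ N, (inner ℝ p y : ℝ) + c ≤ u y) ∧ t = (inner ℝ p x : ℝ) + c}

/-- The second difference operator `Δ_e u_h (x)`. -/
def deltaE {d : ℕ} (Ω : Set (Euc d)) (h : ℝ) (u : Euc d → ℝ) (e : Fin d → ℤ)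
    (x : Euc d) : ℝ :=
  2 / (hev Ω h x e + hev Ω h x (-e)) *
    ((u (x + hev Ω h x e • intVec e) - u x) / hev Ω h x e +
     (u (x + hev Ω h x (-e) • intVec (-e)) - u x) / hev Ω h x (-e))

/-- Discrete convexity with the full set of directions `e ∈ ℤ^d \ {0}`. -/
def DiscConvex {d : ℕ} (Ω : Set (Euc d)) (h : ℝ) (u : Euc d → ℝ) : Prop :=
  ∀ x ∈ meshΩ Ω h, ∀ e : Fin d → ℤ, e ≠ 0 → 0 ≤ deltaE Ω h u e x


/-!
For `p ∈ ∂u(x₀)` with `x₀ ∈ K`, the function `u - ⟪p, ·⟫` attains its minimum over `closure Ω`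
at `x₀`, and every other minimiser `x` is also a subgradient of the Fenchel conjugate
`u*(p) = sup_{closure Ω} (⟪p, ·⟫ - u)` at `p`. Since `u*` is Lipschitz, Rademacher's theorem makes
the set of `p` where `u*` has two subgradients null; off it, `x₀` is a strict minimiser, so
`u - ⟪p, ·⟫` exceeds its minimum by some `δ > 0` on `closure Ω \ U`. For small `h` some node lies
near `x₀` and `u_h` is `δ/4`-close to `u` on the nodes, so the minimiser of `u_h - ⟪p, ·⟫` over the
nodes lies in `U`, and the affine function of slope `p` touching `u_h` from below there shows that
`p ∈ ∂Γ(u_h)` at that node.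
-/

open scoped RealInnerProductSpace

section Conjugate

variable {d : ℕ} {C : Set (Euc d)} {u : Euc d → ℝ}

def fenchelConj (C : Set (Euc d)) (u : Euc d → ℝ) (p : Euc d) : ℝ :=
  sSup ((fun x => ⟪p, x⟫ - u x) '' C)

lemma inner_sub_le_fenchelConj (hC : IsCompact C) (hu : ContinuousOn u C) (p : Euc d)
    {x : Euc d} (hx : x ∈ C) : ⟪p, x⟫ - u x ≤ fenchelConj C u p :=
  le_csSup ((hC.image_of_continuousOn ((innerSL ℝ p).continuous.continuousOn.sub hu)).bddAbove)
    (mem_image_of_mem _ hx)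

lemma lipschitzWith_fenchelConj (hC : IsCompact C) (hu : ContinuousOn u C) :
    ∃ K, LipschitzWith K (fenchelConj C u) := by
  obtain ⟨R, hR, hCR⟩ := hC.isBounded.exists_pos_norm_le
  refine ⟨⟨R, hR.le⟩, LipschitzWith.of_le_add_mul _ fun p q => ?_⟩
  rcases C.eq_empty_or_nonempty with rfl | hne
  · simp only [fenchelConj, image_empty, Real.sSup_empty, zero_add]
    positivity
  refine csSup_le (hne.image _) ?_
  rintro _ ⟨x, hx, rfl⟩
  calc ⟪p, x⟫ - u x = (⟪q, x⟫ - u x) + ⟪p - q, x⟫ := by rw [inner_sub_left]; ring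
    _ ≤ fenchelConj C u q + ‖p - q‖ * ‖x‖ :=
        add_le_add (inner_sub_le_fenchelConj hC hu q hx) (real_inner_le_norm _ _)
    _ ≤ fenchelConj C u q + R * dist p q := by
        rw [dist_eq_norm, mul_comm]
        gcongr
        exact hCR x hx

lemma mem_subdiff_fenchelConj (hC : IsCompact C) (hu : ContinuousOn u C) {x p : Euc d}
    (hx : x ∈ C) (hp : p ∈ subdiff C u x) : x ∈ subdiff univ (fenchelConj C u) p := by
  have hval : fenchelConj C u p = ⟪p, x⟫ - u x := by
    refine le_antisymm (csSup_le ⟨_, mem_image_of_mem _ hx⟩ ?_)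
      (inner_sub_le_fenchelConj hC hu p hx)
    rintro _ ⟨y, hy, rfl⟩
    have := hp y hy
    rw [inner_sub_right] at this
    linarith
  intro q _
  have := inner_sub_le_fenchelConj hC hu q hx
  rw [hval, inner_sub_right, real_inner_comm p x, real_inner_comm q x]
  linarith

lemma subsingleton_subdiff_of_differentiableAt {f : Euc d → ℝ} {p : Euc d}
    (hf : DifferentiableAt ℝ f p) : (subdiff univ f p).Subsingleton := by
  have fderiv_eq : ∀ x ∈ subdiff univ f p, fderiv ℝ f p = innerSL ℝ x := by
    intro x hx
    have hmin : IsLocalMin (fun q => f q - innerSL ℝ x q) p :=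
      Filter.Eventually.of_forall fun q => by
        have := hx q trivial
        simp only [innerSL_apply_apply, inner_sub_right] at this ⊢
        linarith
    exact sub_eq_zero.mp (hmin.hasFDerivAt_eq_zero (hf.hasFDerivAt.sub (innerSL ℝ x).hasFDerivAt))
  intro x hx y hy
  refine ext_inner_left ℝ fun v => ?_
  have := congrArg (fun L => L v) ((fderiv_eq x hx).symm.trans (fderiv_eq y hy))
  simpa [real_inner_comm] using this

lemma volume_nontrivial_subdiff_fenchelConj (hC : IsCompact C) (hu : ContinuousOn u C) :
    volume {p | (subdiff univ (fenchelConj C u) p).Nontrivial} = 0 := by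
  obtain ⟨K, hK⟩ := lipschitzWith_fenchelConj hC hu
  refine measure_mono_null (fun p hp => ?_) (ae_iff.mp hK.ae_differentiableAt)
  exact fun hdiff => hp.not_subsingleton (subsingleton_subdiff_of_differentiableAt hdiff)

end Conjugate

section ConvexEnvelope

variable {d : ℕ} {N : Set (Euc d)} {v : Euc d → ℝ}

lemma bddAbove_affine_minorants (hN : N.Finite) {w : Euc d} (hw : w ∈ convexHull ℝ N) :
    BddAbove {t | ∃ (q : Euc d) (c : ℝ), (∀ y ∈ N, ⟪q, y⟫ + c ≤ v y) ∧ t = ⟪q, w⟫ + c} := by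
  obtain ⟨M, hM⟩ := (hN.image v).bddAbove
  refine ⟨M, ?_⟩
  rintro _ ⟨q, c, hqc, rfl⟩
  have hhalf : convexHull ℝ N ⊆ {z | ⟪q, z⟫ ≤ M - c} :=
    convexHull_min (fun y hy => by
      show ⟪q, y⟫ ≤ M - c
      linarith [hqc y hy, hM (mem_image_of_mem v hy)])
      (convex_halfSpace_le (innerₛₗ ℝ q).isLinear _)
  linarith [show ⟪q, w⟫ ≤ M - c from hhalf hw]

lemma le_convEnv (hN : N.Finite) {w q : Euc d} {c : ℝ} (hw : w ∈ convexHull ℝ N)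
    (hqc : ∀ y ∈ N, ⟪q, y⟫ + c ≤ v y) : ⟪q, w⟫ + c ≤ convEnv N v w :=
  le_csSup (bddAbove_affine_minorants hN hw) ⟨q, c, hqc, rfl⟩

lemma convEnv_le (hN : N.Finite) {y : Euc d} (hy : y ∈ N) : convEnv N v y ≤ v y := by
  obtain ⟨m, hm⟩ := (hN.image v).bddBelow
  refine csSup_le ⟨⟪0, y⟫ + m, 0, m, fun z hz => ?_, rfl⟩ ?_
  · simpa using hm (mem_image_of_mem v hz)
  · rintro _ ⟨q, c, hqc, rfl⟩
    exact hqc y hy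

lemma mem_subdiff_convEnv_of_isMinOn (hN : N.Finite) {y p : Euc d} (hy : y ∈ N)
    (hmin : IsMinOn (fun z => v z - ⟪p, z⟫) N y) :
    p ∈ subdiff (convexHull ℝ N) (convEnv N v) y := by
  intro z hz
  have hL : ⟪p, z⟫ + (v y - ⟪p, y⟫) ≤ convEnv N v z :=
    le_convEnv hN hz fun x hx => by linarith [isMinOn_iff.mp hmin x hx]
  rw [inner_sub_right]
  linarith [convEnv_le (v := v) hN hy]

end ConvexEnvelope

section Lattice

variable {d : ℕ}

lemma finite_meshΩ {Ω : Set (Euc d)} (hΩ : Bornology.IsBounded Ω) {h : ℝ} (hh : 0 < h) :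
    (meshΩ Ω h).Finite := by
  obtain ⟨R, hR⟩ := hΩ.exists_norm_le
  refine ((Set.Finite.pi (t := fun _ => Icc (-⌈R / h⌉) ⌈R / h⌉) fun _ => finite_Icc _ _).image
    fun m : Fin d → ℤ => (EuclideanSpace.equiv (Fin d) ℝ).symm fun i => m i * h).subset ?_
  rintro x ⟨hxΩ, hxL⟩
  choose m hm using hxL
  refine ⟨m, fun i _ => ?_, by ext i; exact (hm i).symm⟩
  have hmi : |(m i : ℝ)| ≤ R / h := by
    rw [le_div_iff₀ hh, ← abs_of_pos hh, ← abs_mul, ← hm i, ← Real.norm_eq_abs]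
    exact (PiLp.norm_apply_le x i).trans (hR x hxΩ)
  have : |m i| ≤ ⌈R / h⌉ := by exact_mod_cast hmi.trans (Int.le_ceil _)
  exact abs_le.mp this

lemma exists_mem_latt_dist_le (x : Euc d) {h : ℝ} (hh : 0 < h) :
    ∃ y ∈ latt d h, dist y x ≤ h * √d := by
  refine ⟨(EuclideanSpace.equiv (Fin d) ℝ).symm fun i => ⌊x i / h⌋ * h,
    fun i => ⟨⌊x i / h⌋, rfl⟩, ?_⟩
  have hcoord : ∀ i, dist ((⌊x i / h⌋ : ℝ) * h) (x i) ≤ h := by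
    intro i
    have hfract : x i - ⌊x i / h⌋ * h = Int.fract (x i / h) * h := by
      rw [← Int.self_sub_floor, sub_mul, div_mul_cancel₀ _ hh.ne']
    rw [dist_comm, Real.dist_eq, hfract, abs_of_nonneg (by positivity)]
    exact mul_le_of_le_one_left hh.le (Int.fract_lt_one _).le
  rw [EuclideanSpace.dist_eq]
  calc √(∑ i, dist ((⌊x i / h⌋ : ℝ) * h) (x i) ^ 2) ≤ √(∑ _ : Fin d, h ^ 2) := by
        gcongr with i; exact hcoord i
    _ = h * √d := by
        rw [Finset.sum_const, Finset.card_univ, Fintype.card_fin, nsmul_eq_mul,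
          Real.sqrt_mul' _ (sq_nonneg h), Real.sqrt_sq hh.le, mul_comm]

end Lattice

section Stability

variable {d : ℕ} {u : Euc d → ℝ} {p x₀ : Euc d}

lemma subdiff_subset_subdiff_closure {Ω : Set (Euc d)} (hu : ContinuousOn u (closure Ω)) :
    subdiff Ω u x₀ ⊆ subdiff (closure Ω) u x₀ := fun _ hp =>
  le_on_closure hp (by fun_prop) hu

lemma exists_gap_of_not_nontrivial_subdiff_fenchelConj {C U : Set (Euc d)} (hC : IsCompact C)
    (hu : ContinuousOn u C) (hU : IsOpen U) (hx₀U : x₀ ∈ U) (hx₀C : x₀ ∈ C)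
    (hp : p ∈ subdiff C u x₀) (hpC : ¬ (subdiff univ (fenchelConj C u) p).Nontrivial) :
    ∃ δ > 0, ∀ y ∈ C \ U, u x₀ - ⟪p, x₀⟫ + δ ≤ u y - ⟪p, y⟫ := by
  have hmin : ∀ y ∈ C, u x₀ - ⟪p, x₀⟫ ≤ u y - ⟪p, y⟫ := fun y hy => by
    linarith [hp y hy, inner_sub_right (𝕜 := ℝ) p y x₀]
  have hlt : ∀ y ∈ C \ U, u x₀ - ⟪p, x₀⟫ < u y - ⟪p, y⟫ := by
    rintro y ⟨hyC, hyU⟩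
    refine (hmin y hyC).lt_of_ne fun heq => hpC ⟨x₀, mem_subdiff_fenchelConj hC hu hx₀C hp,
      y, mem_subdiff_fenchelConj hC hu hyC fun z hz => ?_, fun h => hyU (h ▸ hx₀U)⟩
    linarith [hmin z hz, inner_sub_right (𝕜 := ℝ) p z y]
  have hcont : ContinuousOn (fun y => u y - ⟪p, y⟫) (C \ U) :=
    (hu.mono sdiff_subset).sub (by fun_prop)
  obtain ⟨a, ha, hle⟩ := (hC.diff hU).exists_forall_le' hcont hlt
  exact ⟨a - (u x₀ - ⟪p, x₀⟫), sub_pos.mpr ha, fun y hy => by linarith [hle y hy]⟩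

lemma mem_subdiff_convEnv_of_uniform_approx {N U : Set (Euc d)} (hN : N.Finite) {v : Euc d → ℝ}
    {y₀ : Euc d} {m δ : ℝ} (hgap : ∀ z ∈ N \ U, m + δ ≤ u z - ⟪p, z⟫) (hy₀ : y₀ ∈ N)
    (hy₀m : u y₀ - ⟪p, y₀⟫ < m + δ / 2) (hvu : ∀ z ∈ N, |v z - u z| < δ / 4) :
    p ∈ ⋃ x ∈ U ∩ convexHull ℝ N, subdiff (convexHull ℝ N) (convEnv N v) x := by
  obtain ⟨y, hyN, hmin⟩ := Set.exists_min_image N (fun z => v z - ⟪p, z⟫) hN ⟨y₀, hy₀⟩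
  have hyU : y ∈ U := by
    by_contra hyU
    linarith [hgap y ⟨hyN, hyU⟩, hmin y₀ hy₀, abs_lt.mp (hvu y hyN), abs_lt.mp (hvu y₀ hy₀)]
  exact mem_biUnion ⟨hyU, subset_convexHull ℝ N hyN⟩ (mem_subdiff_convEnv_of_isMinOn hN hyN hmin)

end Stability

lemma eventually_mem_subdiff_convEnv {d : ℕ} {Ω U : Set (Euc d)} (hbd : Bornology.IsBounded Ω)
    {B : ℝ → Set (Euc d)} (hB : ∀ h : ℝ, 0 < h → (B h).Finite ∧ B h ⊆ frontier Ω)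
    {u : Euc d → ℝ} (huc : ContinuousOn u (closure Ω)) {uh : ℝ → Euc d → ℝ}
    (hcvg : ∀ ε : ℝ, 0 < ε → ∃ h₀ : ℝ, 0 < h₀ ∧ ∀ h : ℝ, 0 < h → h < h₀ →
      ∀ x ∈ meshΩ Ω h ∪ B h, |uh h x - u x| < ε)
    (hU : IsOpen U) (hUΩ : U ⊆ Ω) {hk : ℕ → ℝ} (hkpos : ∀ k, 0 < hk k)
    (hktend : Tendsto hk atTop (𝓝 0)) {x₀ p : Euc d} (hx₀ : x₀ ∈ U) (hp : p ∈ subdiff Ω u x₀)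
    (hpC : ¬ (subdiff univ (fenchelConj (closure Ω) u) p).Nontrivial) :
    ∀ᶠ k in atTop, p ∈ ⋃ x ∈ U ∩ convexHull ℝ (meshΩ Ω (hk k) ∪ B (hk k)),
      subdiff (convexHull ℝ (meshΩ Ω (hk k) ∪ B (hk k)))
        (convEnv (meshΩ Ω (hk k) ∪ B (hk k)) (uh (hk k))) x := by
  obtain ⟨δ, hδ, hgap⟩ := exists_gap_of_not_nontrivial_subdiff_fenchelConj hbd.isCompact_closure
    huc hU hx₀ (subset_closure (hUΩ hx₀)) (subdiff_subset_subdiff_closure huc hp) hpC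
  have hcont : ContinuousAt (fun y => u y - ⟪p, y⟫) x₀ :=
    (huc.continuousAt (mem_of_superset (hU.mem_nhds hx₀) (hUΩ.trans subset_closure))).sub
      (by fun_prop)
  obtain ⟨ρ, hρ, hball⟩ := Metric.eventually_nhds_iff.mp ((hU.eventually_mem hx₀).and
    (hcont.eventually (gt_mem_nhds (show u x₀ - ⟪p, x₀⟫ < u x₀ - ⟪p, x₀⟫ + δ / 2 by linarith))))
  obtain ⟨h₀, hh₀, hcvg₀⟩ := hcvg (δ / 4) (by positivity)
  have hsmall : Tendsto (fun k => hk k * √d) atTop (𝓝 0) := by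
    simpa using hktend.mul_const √d
  filter_upwards [hktend.eventually (gt_mem_nhds hh₀), hsmall.eventually (gt_mem_nhds hρ)]
    with k hkh₀ hkρ
  have hh := hkpos k
  obtain ⟨y₀, hy₀L, hy₀x₀⟩ := exists_mem_latt_dist_le x₀ hh
  obtain ⟨hy₀U, hy₀φ⟩ := hball (hy₀x₀.trans_lt hkρ)
  have hnodes : meshΩ Ω (hk k) ∪ B (hk k) ⊆ closure Ω :=
    union_subset (inter_subset_left.trans subset_closure)
      ((hB _ hh).2.trans frontier_subset_closure)
  exact mem_subdiff_convEnv_of_uniform_approx ((finite_meshΩ hbd hh).union (hB _ hh).1)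
    (fun z hz => hgap z ⟨hnodes hz.1, hz.2⟩) (Or.inl ⟨hUΩ hy₀U, hy₀L⟩) hy₀φ
    (hcvg₀ _ hh hkh₀)

theorem statement13_general {d : ℕ} (Ω : Set (Euc d))
    (hbd : Bornology.IsBounded Ω)
    (B : ℝ → Set (Euc d)) (hB : ∀ h : ℝ, 0 < h → (B h).Finite ∧ B h ⊆ frontier Ω)
    (u : Euc d → ℝ) (huc : ContinuousOn u (closure Ω))
    (uh : ℝ → Euc d → ℝ)
    (hcvg : ∀ ε : ℝ, 0 < ε → ∃ h₀ : ℝ, 0 < h₀ ∧ ∀ h : ℝ, 0 < h → h < h₀ →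
      ∀ x ∈ meshΩ Ω h ∪ B h, |uh h x - u x| < ε)
    (K : Set (Euc d))
    (U : Set (Euc d)) (hU : IsOpen U) (hKU : K ⊆ U) (hUΩ : closure U ⊆ Ω) :
    ∀ hk : ℕ → ℝ, (∀ k, 0 < hk k) → Tendsto hk atTop (𝓝 0) →
    volume ((⋃ x ∈ K, subdiff Ω u x) \
      (⋃ n : ℕ, ⋂ k ∈ Ici n, ⋃ x ∈ U ∩ convexHull ℝ (meshΩ Ω (hk k) ∪ B (hk k)),
        subdiff (convexHull ℝ (meshΩ Ω (hk k) ∪ B (hk k)))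
          (convEnv (meshΩ Ω (hk k) ∪ B (hk k)) (uh (hk k))) x)) = 0 := by
  intro hk hkpos hktend
  refine measure_mono_null (fun p ⟨hpK, hpN⟩ => ?_)
    (volume_nontrivial_subdiff_fenchelConj hbd.isCompact_closure huc)
  by_contra hpC
  obtain ⟨x₀, hx₀K, hp⟩ := mem_iUnion₂.mp hpK
  obtain ⟨n, hn⟩ := eventually_atTop.mp <| eventually_mem_subdiff_convEnv hbd hB huc hcvg hU
    (subset_closure.trans hUΩ) hkpos hktend (hKU hx₀K) hp hpC
  exact hpN (mem_iUnion.mpr ⟨n, mem_iInter₂.mpr hn⟩)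

/-- if `u_h → u` uniformly on `closure Ω` with `u` convex on `closure Ω` and
continuous on `closure Ω`, and `K ⊂ U ⊆ closure U ⊂ Ω` with `K` compact, `U` open, then for
every sequence `h_k → 0` the set
`∂u(K) \ (⋃ n, ⋂ k ≥ n, ∂Γ(u_{h_k})(U ∩ conv N_{h_k}))` is Lebesgue-null. -/
theorem statement13 {d : ℕ} (hd : 1 ≤ d) (Ω : Set (Euc d))
    (hne : Ω.Nonempty) (hbd : Bornology.IsBounded Ω) (hop : IsOpen Ω) (hcv : Convex ℝ Ω)
    (B : ℝ → Set (Euc d)) (hB : ∀ h : ℝ, 0 < h → (B h).Finite ∧ B h ⊆ frontier Ω)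
    (u : Euc d → ℝ) (huc : ContinuousOn u (closure Ω)) (hucv : ConvexOn ℝ (closure Ω) u)
    (uh : ℝ → Euc d → ℝ)
    (hcvg : ∀ ε : ℝ, 0 < ε → ∃ h₀ : ℝ, 0 < h₀ ∧ ∀ h : ℝ, 0 < h → h < h₀ →
      ∀ x ∈ meshΩ Ω h ∪ B h, |uh h x - u x| < ε)
    (K : Set (Euc d)) (hK : IsCompact K)
    (U : Set (Euc d)) (hU : IsOpen U) (hKU : K ⊆ U) (hUΩ : closure U ⊆ Ω) :
    ∀ hk : ℕ → ℝ, (∀ k, 0 < hk k) → Tendsto hk atTop (𝓝 0) →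
    volume ((⋃ x ∈ K, subdiff Ω u x) \
      (⋃ n : ℕ, ⋂ k ∈ Ici n, ⋃ x ∈ U ∩ convexHull ℝ (meshΩ Ω (hk k) ∪ B (hk k)),
        subdiff (convexHull ℝ (meshΩ Ω (hk k) ∪ B (hk k)))
          (convEnv (meshΩ Ω (hk k) ∪ B (hk k)) (uh (hk k))) x)) = 0 :=
  statement13_general Ω hbd B hB u huc uh hcvg K U hU hKU hUΩ

end
end

section
/- Let (u_h)_{h>0} be mesh functions with |u_h(x)| ≤ M for all x ∈ N_h and all h, with M independent of h. Then there exist a sequence h_k → 0 and a convex function v : Ω → ℝ such that Γ(u_{h_k}) converges to v uniformly on compact subsets of Ω: for every compact K ⊂ Ω, sup_{x∈K} |Γ(u_{h_k})(x) − v(x)| → 0 as k → ∞ (K ⊆ conv(N_{h_k}) for k large). -/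
open Set MeasureTheory Filter Topology

noncomputable section

/-!
Each envelope `Γ(u_h)` is a supremum of affine minorants of `u_h`, hence convex on `conv N_h`,
where it is bounded by `M`. Every point of `ℝ^d` is a convex combination of the corners of its
lattice cell, so a compact `K ⊆ Ω` lies in `conv Ω_h` as soon as `√d h` is smaller than its
distance to `∂Ω`. Hence on a fixed neighbourhood of `K` the envelopes are eventually convex and
bounded by `M`, and therefore uniformly Lipschitz on `K`. A diagonal (Arzelà–Ascoli) argument over
a countable dense subset of `Ω` gives a subsequence converging locally uniformly on `Ω`, and the
limit is convex because the envelopes are eventually convex on every segment of `Ω`.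
-/

lemma mem_convexHull_of_forall_latt_cube {d : ℕ} {h : ℝ} (hh : 0 < h) (x : Euc d)
    {S : Set (Euc d)} (hS : ∀ y ∈ latt d h, (∀ i, |y i - x i| ≤ h) → y ∈ S) :
    x ∈ convexHull ℝ S := by
  let e := (EuclideanSpace.equiv (Fin d) ℝ).toLinearEquiv
  let lo : Fin d → ℝ := fun i => ⌊x i / h⌋ * h
  have hlo : ∀ i, lo i ≤ x i ∧ x i ≤ lo i + h := fun i => by
    constructor
    · exact (le_div_iff₀ hh).1 (Int.floor_le _)
    · have := (div_lt_iff₀ hh).1 (Int.lt_floor_add_one (x i / h))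
      simp only [lo]; linarith
  let t : Fin d → Set ℝ := fun i => {lo i, lo i + h}
  have hx : e x ∈ convexHull ℝ (univ.pi t) := by
    rw [convexHull_pi]
    intro i _
    change x i ∈ convexHull ℝ {lo i, lo i + h}
    rw [convexHull_pair, segment_eq_Icc (by linarith)]
    exact hlo i
  have hxS : x ∈ convexHull ℝ (e.symm '' univ.pi t) := by
    have himage := (e.symm : (Fin d → ℝ) →ₗ[ℝ] Euc d).image_convexHull (univ.pi t)
    rw [LinearEquiv.coe_coe] at himage
    rw [← himage]
    exact ⟨e x, hx, e.symm_apply_apply x⟩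
  refine convexHull_mono ?_ hxS
  rintro _ ⟨z, hz, rfl⟩
  have hzi : ∀ i, (e.symm z) i = z i := fun i => rfl
  apply hS
  · intro i
    rcases hz i (mem_univ i) with hzi' | hzi'
    · exact ⟨⌊x i / h⌋, by rw [hzi, hzi']⟩
    · exact ⟨⌊x i / h⌋ + 1, by rw [hzi, hzi']; push_cast; ring⟩
  · intro i
    rw [hzi, abs_le]
    rcases hz i (mem_univ i) with hzi' | hzi' <;> rw [hzi'] <;>
      constructor <;> linarith [hlo i]

lemma dist_le_sqrt_mul_of_forall_abs_sub_le {d : ℕ} {x y : Euc d} {h : ℝ} (hh : 0 ≤ h)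
    (hxy : ∀ i, |y i - x i| ≤ h) : dist y x ≤ √d * h := by
  rw [EuclideanSpace.dist_eq, ← Real.sqrt_sq hh, ← Real.sqrt_mul (Nat.cast_nonneg d)]
  gcongr
  calc ∑ i, dist (y i) (x i) ^ 2 ≤ ∑ _i : Fin d, h ^ 2 := by
        gcongr with i
        rw [Real.dist_eq]
        exact hxy i
    _ = d * h ^ 2 := by simp

lemma eventually_subset_convexHull_meshΩ {d : ℕ} {Ω K : Set (Euc d)} (hΩ : IsOpen Ω)
    (hK : IsCompact K) (hKΩ : K ⊆ Ω) :
    ∀ᶠ h in 𝓝[>] 0, K ⊆ convexHull ℝ (meshΩ Ω h) := by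
  obtain ⟨δ, hδ, hKδ⟩ := hK.exists_thickening_subset_open hΩ hKΩ
  filter_upwards [Ioo_mem_nhdsGT (show 0 < δ / (√d + 1) by positivity)] with h ⟨hh, hhδ⟩ x hx
  refine mem_convexHull_of_forall_latt_cube hh x fun y hy hyx =>
    ⟨hKδ (Metric.mem_thickening_iff.2 ⟨x, hx, ?_⟩), hy⟩
  rw [lt_div_iff₀ (by positivity)] at hhδ
  calc dist y x ≤ √d * h := dist_le_sqrt_mul_of_forall_abs_sub_le hh.le hyx
    _ < δ := by linarith

section ConvexEnvelope

variable {d : ℕ} {N : Set (Euc d)} {u : Euc d → ℝ} {M : ℝ}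

lemma affine_le_of_mem_convexHull {p : Euc d} {c : ℝ} (hpc : ∀ y ∈ N, inner ℝ p y + c ≤ u y)
    (hu : ∀ y ∈ N, u y ≤ M) {x : Euc d} (hx : x ∈ convexHull ℝ N) : inner ℝ p x + c ≤ M := by
  have hhalf : Convex ℝ {z : Euc d | inner ℝ p z ≤ M - c} :=
    convex_halfSpace_le (innerₛₗ ℝ p).isLinear _
  have : x ∈ {z : Euc d | inner ℝ p z ≤ M - c} :=
    convexHull_min (fun y hy => show inner ℝ p y ≤ M - c by linarith [hpc y hy, hu y hy])
      hhalf hx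
  linarith [show inner ℝ p x ≤ M - c from this]

variable (hu : ∀ y ∈ N, |u y| ≤ M)
include hu

lemma affine_le_convEnv {p : Euc d} {c : ℝ} (hpc : ∀ y ∈ N, inner ℝ p y + c ≤ u y) {x : Euc d}
    (hx : x ∈ convexHull ℝ N) : inner ℝ p x + c ≤ convEnv N u x :=
  le_csSup ⟨M, by
    rintro _ ⟨q, b, hqb, rfl⟩
    exact affine_le_of_mem_convexHull hqb (fun y hy => (abs_le.1 (hu y hy)).2) hx⟩
    ⟨p, c, hpc, rfl⟩

lemma abs_convEnv_le {x : Euc d} (hx : x ∈ convexHull ℝ N) : |convEnv N u x| ≤ M := by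
  have hlower : ∀ y ∈ N, inner ℝ (0 : Euc d) y + -M ≤ u y := fun y hy => by
    simpa using (abs_le.1 (hu y hy)).1
  refine abs_le.2 ⟨by simpa using affine_le_convEnv hu hlower hx, ?_⟩
  refine csSup_le ⟨_, 0, -M, hlower, rfl⟩ ?_
  rintro _ ⟨p, c, hpc, rfl⟩
  exact affine_le_of_mem_convexHull hpc (fun y hy => (abs_le.1 (hu y hy)).2) hx

lemma convexOn_convEnv : ConvexOn ℝ (convexHull ℝ N) (convEnv N u) := by
  refine ⟨convex_convexHull ℝ N, fun x hx y hy a b ha hb hab => ?_⟩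
  refine csSup_le ⟨_, 0, -M, fun y hy => by simpa using (abs_le.1 (hu y hy)).1, rfl⟩ ?_
  rintro _ ⟨p, c, hpc, rfl⟩
  have hx' := affine_le_convEnv hu hpc hx
  have hy' := affine_le_convEnv hu hpc hy
  calc inner ℝ p (a • x + b • y) + c = a * (inner ℝ p x + c) + b * (inner ℝ p y + c) := by
        rw [inner_add_right, real_inner_smul_right, real_inner_smul_right]
        linear_combination (-c) * hab
    _ ≤ a • convEnv N u x + b • convEnv N u y := by
        simp only [smul_eq_mul]; gcongr

end ConvexEnvelope

lemma ConvexOn.lipschitzOnWith_of_thickening_subset {E : Type*} [NormedAddCommGroup E]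
    [NormedSpace ℝ E] {S K : Set E} {f : E → ℝ} {M δ : ℝ} (hf : ConvexOn ℝ S f) (hδ : 0 < δ)
    (hKS : Metric.thickening δ K ⊆ S) (hM : ∀ z ∈ S, |f z| ≤ M) :
    LipschitzOnWith (4 * M / δ).toNNReal f K := by
  refine LipschitzOnWith.of_dist_le' fun x hx y hy => ?_
  have hball : Metric.ball x δ ⊆ S := (Metric.ball_subset_thickening hx δ).trans hKS
  have hK : K ⊆ S := (Metric.self_subset_thickening hδ K).trans hKS
  have hM0 : 0 ≤ M := (abs_nonneg _).trans (hM x (hK hx))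
  rcases lt_or_ge (dist y x) (δ / 2) with hyx | hyx
  · have hlip := (hf.subset hball (convex_ball x δ)).lipschitzOnWith_of_abs_le (half_pos hδ)
      fun z hz => hM z (hball hz)
    have hconst : 2 * M / (δ / 2) = 4 * M / δ := by field_simp; ring
    rw [hconst, sub_half] at hlip
    have := hlip.dist_le_mul x (Metric.mem_ball_self (half_pos hδ)) y hyx
    rwa [Real.coe_toNNReal _ (by positivity)] at this
  · calc dist (f x) (f y) ≤ 2 * M := by
          rw [Real.dist_eq]
          linarith [abs_sub (f x) (f y), hM x (hK hx), hM y (hK hy)]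
      _ = 4 * M / δ * (δ / 2) := by field_simp; ring
      _ ≤ 4 * M / δ * dist x y := by rw [dist_comm] at hyx; gcongr

lemma exists_subseq_forall_tendsto {ι : Type*} [Countable ι] (f : ℕ → ι → ℝ)
    (hf : ∀ i, ∃ C, ∀ᶠ k in atTop, |f k i| ≤ C) :
    ∃ φ : ℕ → ℕ, StrictMono φ ∧ ∀ i, ∃ L, Tendsto (fun k => f (φ k) i) atTop (𝓝 L) := by
  choose C hC using hf
  have hCC : ∀ i, -|C i| ≤ |C i| := fun i => by linarith [abs_nonneg (C i)]
  -- clamping makes the sequence live in a compact metrizable product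
  let G : ℕ → (i : ι) → Icc (-|C i|) |C i| := fun k i => projIcc _ _ (hCC i) (f k i)
  obtain ⟨g, φ, hφ, hg⟩ := CompactSpace.tendsto_subseq G
  refine ⟨φ, hφ, fun i => ⟨g i, ?_⟩⟩
  have hgi : Tendsto (fun k => (G (φ k) i : ℝ)) atTop (𝓝 (g i)) :=
    (continuous_subtype_val.tendsto _).comp ((continuous_apply i).tendsto g |>.comp hg)
  refine hgi.congr' ((hφ.tendsto_atTop.eventually (hC i)).mono fun k hk => ?_)
  exact congrArg Subtype.val (projIcc_of_mem _ (abs_le.1 (hk.trans (le_abs_self _))))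

lemma uniformCauchySeqOn_of_lipschitzOnWith {X : Type*} [PseudoMetricSpace X]
    {f : ℕ → X → ℝ} {S K D : Set X} {C : NNReal} (hlip : ∀ᶠ k in atTop, LipschitzOnWith C (f k) S)
    (hK : IsCompact K) (hKS : K ⊆ S) (hKD : K ⊆ closure (D ∩ S))
    (hD : ∀ y ∈ D, CauchySeq fun k => f k y) : UniformCauchySeqOn f atTop K := by
  intro U hU
  obtain ⟨ε, hε, hεU⟩ := Metric.mem_uniformity_dist.1 hU
  set ρ := ε / (3 * (C + 1))
  have hρ : 0 < ρ := by positivity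
  have hCρ : C * ρ ≤ ε / 3 := by
    rw [mul_div_assoc', div_le_div_iff₀ (by positivity) (by norm_num)]
    nlinarith [C.coe_nonneg]
  obtain ⟨T, hTDS, hT, hKT⟩ := hK.elim_finite_subcover_image (b := D ∩ S)
    (c := fun y => Metric.ball y ρ) (fun y _ => Metric.isOpen_ball) fun x hx => by
      obtain ⟨y, hy, hxy⟩ := Metric.mem_closure_iff.1 (hKD hx) ρ hρ
      exact mem_biUnion hy (Metric.mem_ball.2 hxy)
  have hcauchyT : ∀ᶠ p in atTop ×ˢ atTop, ∀ y ∈ T, dist (f p.1 y) (f p.2 y) < ε / 3 :=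
    (hT.eventually_all).2 fun y hy =>
      prod_atTop_atTop_eq (α := ℕ) (β := ℕ) ▸
        (cauchySeq_iff_tendsto_dist_atTop_0.1 (hD y (hTDS hy).1)).eventually
        (gt_mem_nhds (by positivity))
  filter_upwards [hcauchyT, hlip.prod_inl atTop, hlip.prod_inr atTop]
    with p hp hlip₁ hlip₂ x hx
  obtain ⟨y, hyT, hxy⟩ := mem_iUnion₂.1 (hKT hx)
  have hyS := (hTDS hyT).2
  have hxy' : C * dist x y ≤ ε / 3 :=
    (mul_le_mul_of_nonneg_left (Metric.mem_ball.1 hxy).le C.coe_nonneg).trans hCρ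
  apply hεU
  calc dist (f p.1 x) (f p.2 x)
      ≤ dist (f p.1 x) (f p.1 y) + dist (f p.1 y) (f p.2 y) + dist (f p.2 y) (f p.2 x) :=
        dist_triangle4 _ _ _ _
    _ < ε / 3 + ε / 3 + ε / 3 := by
        have h₁ := hlip₁.dist_le_mul x (hKS hx) y hyS
        have h₂ := hlip₂.dist_le_mul y hyS x (hKS hx)
        rw [dist_comm y x] at h₂
        linarith [hp y hyT]
    _ = ε := by ring

theorem exists_subseq_tendstoLocallyUniformlyOn {X : Type*} [MetricSpace X] [ProperSpace X]
    {Ω : Set X} (hΩ : IsOpen Ω) (f : ℕ → X → ℝ)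
    (hbdd : ∀ x ∈ Ω, ∃ C, ∀ᶠ k in atTop, |f k x| ≤ C)
    (hlip : ∀ K, IsCompact K → K ⊆ Ω → ∃ C : NNReal, ∀ᶠ k in atTop, LipschitzOnWith C (f k) K) :
    ∃ φ : ℕ → ℕ, StrictMono φ ∧ ∃ v : X → ℝ,
      TendstoLocallyUniformlyOn (fun k => f (φ k)) v atTop Ω := by
  obtain ⟨s, hsc, hsd⟩ := TopologicalSpace.exists_countable_dense X
  have : Countable ↥(s ∩ Ω) := (hsc.mono inter_subset_left).to_subtype
  obtain ⟨φ, hφ, hconv⟩ := exists_subseq_forall_tendsto (fun k (y : ↥(s ∩ Ω)) => f k y)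
    fun y => hbdd y y.2.2
  have hcauchy : ∀ K, IsCompact K → K ⊆ Ω → UniformCauchySeqOn (fun k => f (φ k)) atTop K := by
    intro K hK hKΩ
    obtain ⟨δ, hδ, hKδ⟩ := hK.exists_thickening_subset_open hΩ hKΩ
    have hSΩ : Metric.cthickening (δ / 2) K ⊆ Ω :=
      (Metric.cthickening_subset_thickening' hδ (half_lt_self hδ) K).trans hKδ
    obtain ⟨C, hC⟩ := hlip _ hK.cthickening hSΩ
    have hthick : Metric.thickening (δ / 2) K ⊆ Metric.cthickening (δ / 2) K :=
      Metric.thickening_subset_cthickening _ _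
    refine uniformCauchySeqOn_of_lipschitzOnWith (D := s ∩ Ω) (hφ.tendsto_atTop.eventually hC) hK
      (Metric.self_subset_cthickening K) ?_ fun y hy => (hconv ⟨y, hy⟩).choose_spec.cauchySeq
    refine (Metric.self_subset_thickening (half_pos hδ) K).trans
      ((hsd.open_subset_closure_inter Metric.isOpen_thickening).trans (closure_mono ?_))
    rintro y ⟨hyK, hys⟩
    exact ⟨⟨hys, hSΩ (hthick hyK)⟩, hthick hyK⟩
  have hlim : ∀ x ∈ Ω, ∃ L, Tendsto (fun k => f (φ k) x) atTop (𝓝 L) := fun x hx =>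
    cauchySeq_tendsto_of_complete <|
      (hcauchy {x} isCompact_singleton (singleton_subset_iff.2 hx)).cauchySeq rfl
  choose! v hv using hlim
  exact ⟨φ, hφ, v, (tendstoLocallyUniformlyOn_iff_forall_isCompact hΩ).2 fun K hKΩ hK =>
    (hcauchy K hK hKΩ).tendstoUniformlyOn_of_tendsto fun x hx => hv x (hKΩ hx)⟩

lemma convexOn_of_tendsto {E ι : Type*} [AddCommGroup E] [Module ℝ E] {l : Filter ι} [l.NeBot]
    {f : ι → E → ℝ} {v : E → ℝ} {s : Set E} (hs : Convex ℝ s)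
    (hf : ∀ x ∈ s, ∀ y ∈ s, ∀ᶠ i in l, ConvexOn ℝ (segment ℝ x y) (f i))
    (hv : ∀ x ∈ s, Tendsto (fun i => f i x) l (𝓝 (v x))) : ConvexOn ℝ s v := by
  refine ⟨hs, fun x hx y hy a b ha hb hab => ?_⟩
  refine le_of_tendsto_of_tendsto (hv _ (hs hx hy ha hb hab))
    (((hv x hx).const_smul a).add ((hv y hy).const_smul b)) ?_
  filter_upwards [hf x hx y hy] with i hi
  exact hi.2 (left_mem_segment ℝ x y) (right_mem_segment ℝ x y) ha hb hab

lemma exists_eventually_lipschitzOnWith_of_convexOn {E : Type*} [NormedAddCommGroup E]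
    [NormedSpace ℝ E] [ProperSpace E] {Ω : Set E} (hΩ : IsOpen Ω) {C : ℕ → Set E}
    {f : ℕ → E → ℝ} {M : ℝ} (hf : ∀ k, ConvexOn ℝ (C k) (f k)) (hM : ∀ k, ∀ x ∈ C k, |f k x| ≤ M)
    (hC : ∀ K, IsCompact K → K ⊆ Ω → ∀ᶠ k in atTop, K ⊆ C k) {K : Set E} (hK : IsCompact K)
    (hKΩ : K ⊆ Ω) : ∃ L : NNReal, ∀ᶠ k in atTop, LipschitzOnWith L (f k) K := by
  obtain ⟨δ, hδ, hKδ⟩ := hK.exists_thickening_subset_open hΩ hKΩ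
  have hSΩ : Metric.cthickening (δ / 2) K ⊆ Ω :=
    (Metric.cthickening_subset_thickening' hδ (half_lt_self hδ) K).trans hKδ
  refine ⟨(4 * M / (δ / 2)).toNNReal, (hC _ hK.cthickening hSΩ).mono fun k hk => ?_⟩
  exact (hf k).lipschitzOnWith_of_thickening_subset (half_pos hδ)
    ((Metric.thickening_subset_cthickening _ _).trans hk) (hM k)

theorem exists_subseq_tendstoLocallyUniformlyOn_of_convexOn {E : Type*} [NormedAddCommGroup E]
    [NormedSpace ℝ E] [ProperSpace E] {Ω : Set E} (hΩ : IsOpen Ω) (hΩc : Convex ℝ Ω)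
    {C : ℕ → Set E} {f : ℕ → E → ℝ} {M : ℝ} (hf : ∀ k, ConvexOn ℝ (C k) (f k))
    (hM : ∀ k, ∀ x ∈ C k, |f k x| ≤ M) (hC : ∀ K, IsCompact K → K ⊆ Ω → ∀ᶠ k in atTop, K ⊆ C k) :
    ∃ φ : ℕ → ℕ, StrictMono φ ∧ ∃ v : E → ℝ, ConvexOn ℝ Ω v ∧
      TendstoLocallyUniformlyOn (fun k => f (φ k)) v atTop Ω := by
  obtain ⟨φ, hφ, v, hv⟩ := exists_subseq_tendstoLocallyUniformlyOn hΩ f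
    (fun x hx => ⟨M, (hC {x} isCompact_singleton (singleton_subset_iff.2 hx)).mono
      fun k hk => hM k x (hk rfl)⟩)
    fun K hK hKΩ => exists_eventually_lipschitzOnWith_of_convexOn hΩ hf hM hC hK hKΩ
  refine ⟨φ, hφ, v, convexOn_of_tendsto hΩc (fun x hx y hy => ?_) (fun x hx => hv.tendsto_at hx),
    hv⟩
  have hseg : IsCompact (segment ℝ x y) :=
    convexHull_pair (𝕜 := ℝ) x y ▸ (toFinite {x, y}).isCompact_convexHull ℝ
  exact (hφ.tendsto_atTop.eventually (hC _ hseg (hΩc.segment_subset hx hy))).mono fun k hk =>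
    (hf (φ k)).subset hk (convex_segment x y)

theorem statement15_general {d : ℕ} (Ω : Set (Euc d))
    (hop : IsOpen Ω) (hcv : Convex ℝ Ω)
    (B : ℝ → Set (Euc d))
    (uh : ℝ → Euc d → ℝ)
    (M : ℝ) (hM : ∀ h : ℝ, 0 < h → ∀ x ∈ meshΩ Ω h ∪ B h, |uh h x| ≤ M) :
    ∃ hk : ℕ → ℝ, (∀ k, 0 < hk k) ∧ Tendsto hk atTop (𝓝 0) ∧
    ∃ v : Euc d → ℝ, ConvexOn ℝ Ω v ∧
      ∀ K : Set (Euc d), IsCompact K → K ⊆ Ω →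
        (∃ k₀ : ℕ, ∀ k ≥ k₀, K ⊆ convexHull ℝ (meshΩ Ω (hk k) ∪ B (hk k))) ∧
        (∀ ε : ℝ, 0 < ε → ∃ k₁ : ℕ, ∀ k ≥ k₁, ∀ x ∈ K,
          |convEnv (meshΩ Ω (hk k) ∪ B (hk k)) (uh (hk k)) x - v x| < ε) := by
  set h : ℕ → ℝ := fun k => 1 / ((k : ℝ) + 1)
  set N : ℕ → Set (Euc d) := fun k => meshΩ Ω (h k) ∪ B (h k)
  have hpos : ∀ k, 0 < h k := fun k => by positivity
  have hfill : ∀ K, IsCompact K → K ⊆ Ω → ∀ᶠ k in atTop, K ⊆ convexHull ℝ (N k) :=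
    fun K hK hKΩ => (tendsto_nhdsWithin_iff.2 ⟨tendsto_one_div_add_atTop_nhds_zero_nat,
      .of_forall hpos⟩).eventually ((eventually_subset_convexHull_meshΩ hop hK hKΩ).mono
        fun _ hsub => hsub.trans (convexHull_mono subset_union_left))
  obtain ⟨φ, hφ, v, hvconv, hv⟩ := exists_subseq_tendstoLocallyUniformlyOn_of_convexOn hop hcv
    (fun k => convexOn_convEnv (hM _ (hpos k))) (fun k _ hx => abs_convEnv_le (hM _ (hpos k)) hx)
    hfill
  refine ⟨fun k => h (φ k), fun k => hpos _,
    tendsto_one_div_add_atTop_nhds_zero_nat.comp hφ.tendsto_atTop, v, hvconv, fun K hK hKΩ =>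
      ⟨eventually_atTop.1 (hφ.tendsto_atTop.eventually (hfill K hK hKΩ)), fun ε hε => ?_⟩⟩
  obtain ⟨k₁, hk₁⟩ := eventually_atTop.1 <| Metric.tendstoUniformlyOn_iff.1
    ((tendstoLocallyUniformlyOn_iff_forall_isCompact hop).1 hv K hKΩ hK) ε hε
  exact ⟨k₁, fun k hk x hx => by rw [abs_sub_comm, ← Real.dist_eq]; exact hk₁ k hk x hx⟩

/-- if `|u_h| ≤ M` on the nodes uniformly in `h`, there is a sequence
`h_k → 0` and a convex `v : Ω → ℝ` with `Γ(u_{h_k}) → v` uniformly on compact subsets of `Ω`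
(with `K ⊆ conv N_{h_k}` for `k` large). -/
theorem statement15 {d : ℕ} (hd : 1 ≤ d) (Ω : Set (Euc d))
    (hne : Ω.Nonempty) (hbd : Bornology.IsBounded Ω) (hop : IsOpen Ω) (hcv : Convex ℝ Ω)
    (B : ℝ → Set (Euc d)) (hB : ∀ h : ℝ, 0 < h → (B h).Finite ∧ B h ⊆ frontier Ω)
    (uh : ℝ → Euc d → ℝ)
    (M : ℝ) (hM : ∀ h : ℝ, 0 < h → ∀ x ∈ meshΩ Ω h ∪ B h, |uh h x| ≤ M) :
    ∃ hk : ℕ → ℝ, (∀ k, 0 < hk k) ∧ Tendsto hk atTop (𝓝 0) ∧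
    ∃ v : Euc d → ℝ, ConvexOn ℝ Ω v ∧
      ∀ K : Set (Euc d), IsCompact K → K ⊆ Ω →
        (∃ k₀ : ℕ, ∀ k ≥ k₀, K ⊆ convexHull ℝ (meshΩ Ω (hk k) ∪ B (hk k))) ∧
        (∀ ε : ℝ, 0 < ε → ∃ k₁ : ℕ, ∀ k ≥ k₁, ∀ x ∈ K,
          |convEnv (meshΩ Ω (hk k) ∪ B (hk k)) (uh (hk k)) x - v x| < ε) :=
  statement15_general Ω hop hcv B uh M hM

end
end

section
/- Let (u_h)_{h>0} be discrete convex mesh functions (with the full set of directions e ∈ ℤ^d \ {0}) converging uniformly on compact subsets of Ω to a continuous function u : Ω → ℝ. Then u is convex on Ω. -/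
open Set MeasureTheory Filter Topology

noncomputable section

/-- Node set `N_h = Ω_h ∪ ∂Ω_h` with the full set of directions `e ∈ ℤ^d \ {0}`. -/
def nodesAll {d : ℕ} (Ω : Set (Euc d)) (h : ℝ) : Set (Euc d) :=
  meshΩ Ω h ∪ meshBd Ω h {e : Fin d → ℤ | e ≠ 0}

/-!
Fix `y, z ∈ Ω` with midpoint `m`. Round `m` down to a lattice point `x` and choose the integer
direction `e` with `h • e` the rounding of `y - x`; then `x + h e → y` and `x - h e → z` as `h → 0`,
all three nodes lie in `Ω` for small `h`, and discrete convexity at `x` in direction `e` reads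
`u_h(x) ≤ (u_h(x + h e) + u_h(x - h e)) / 2`. Uniform convergence on a compact neighbourhood of each
limit point together with continuity of `u` passes this to `u m ≤ (u y + u z) / 2`.
A continuous midpoint-convex function is convex: on a segment, the difference `φ` with the chord
vanishes at the ends and attains its maximum at some `t₀`; midpoint convexity between `t₀`'s mirror
image in the nearer endpoint and that endpoint gives `φ t₀ ≤ φ t₀ / 2`.
-/

theorem nonpos_of_midpoint_le_on_Icc {φ : ℝ → ℝ} (hφ : ContinuousOn φ (Icc 0 1))
    (h0 : φ 0 ≤ 0) (h1 : φ 1 ≤ 0)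
    (hmid : ∀ s ∈ Icc (0 : ℝ) 1, ∀ t ∈ Icc (0 : ℝ) 1, φ ((s + t) / 2) ≤ (φ s + φ t) / 2) :
    ∀ t ∈ Icc (0 : ℝ) 1, φ t ≤ 0 := by
  obtain ⟨t₀, ht₀, hmax⟩ := isCompact_Icc.exists_isMaxOn (nonempty_Icc.2 zero_le_one) hφ
  suffices φ t₀ ≤ 0 from fun t ht => (hmax ht).trans this
  rcases le_total t₀ (1 / 2) with h | h
  · have hmem : 2 * t₀ ∈ Icc (0 : ℝ) 1 := ⟨by linarith [ht₀.1], by linarith⟩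
    have := hmid 0 (left_mem_Icc.2 zero_le_one) _ hmem
    rw [zero_add, mul_div_cancel_left₀ _ two_ne_zero] at this
    linarith [isMaxOn_iff.1 hmax _ hmem]
  · have hmem : 2 * t₀ - 1 ∈ Icc (0 : ℝ) 1 := ⟨by linarith, by linarith [ht₀.2]⟩
    have := hmid _ hmem 1 (right_mem_Icc.2 zero_le_one)
    rw [show (2 * t₀ - 1 + 1) / 2 = t₀ by ring] at this
    linarith [isMaxOn_iff.1 hmax _ hmem]

theorem convexOn_of_midpoint_le {E : Type*} [AddCommGroup E] [Module ℝ E] [TopologicalSpace E]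
    [IsTopologicalAddGroup E] [ContinuousSMul ℝ E] {s : Set E} {f : E → ℝ}
    (hs : Convex ℝ s) (hf : ContinuousOn f s)
    (hmid : ∀ x ∈ s, ∀ y ∈ s, f (midpoint ℝ x y) ≤ (f x + f y) / 2) : ConvexOn ℝ s f := by
  refine ⟨hs, fun x hx y hy a b ha hb hab => ?_⟩
  obtain rfl : a = 1 - b := by linarith
  set P : ℝ → E := fun t => (1 - t) • x + t • y
  have hP : ∀ t ∈ Icc (0 : ℝ) 1, P t ∈ s := fun t ht =>
    hs hx hy (by linarith [ht.2]) ht.1 (by ring)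
  set φ : ℝ → ℝ := fun t => f (P t) - ((1 - t) * f x + t * f y)
  have hφ : ContinuousOn φ (Icc 0 1) :=
    (hf.comp (by fun_prop) hP).sub (by fun_prop)
  have hφmid : ∀ r ∈ Icc (0 : ℝ) 1, ∀ t ∈ Icc (0 : ℝ) 1, φ ((r + t) / 2) ≤ (φ r + φ t) / 2 := by
    intro r hr t ht
    have hPmid : P ((r + t) / 2) = midpoint ℝ (P r) (P t) := by
      simp only [P, midpoint_eq_smul_add, invOf_eq_inv]; module
    have := hmid _ (hP r hr) _ (hP t ht)
    simp only [φ, hPmid]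
    linarith
  have := nonpos_of_midpoint_le_on_Icc hφ (by simp [φ, P]) (by simp [φ, P]) hφmid b
    ⟨hb, by linarith⟩
  simp only [φ, P, smul_eq_mul] at this ⊢
  linarith

theorem tendsto_apply_of_uniform_on_compacts {X : Type*} [PseudoMetricSpace X] [ProperSpace X]
    {Ω : Set X} {N : ℝ → Set X} {uh : ℝ → X → ℝ} {u : X → ℝ}
    (hcvg : ∀ K : Set X, IsCompact K → K ⊆ Ω → ∀ ε : ℝ, 0 < ε →
      ∃ h₀ : ℝ, 0 < h₀ ∧ ∀ h : ℝ, 0 < h → h < h₀ → ∀ x ∈ N h ∩ K, |uh h x - u x| < ε)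
    {p : X} (hΩ : Ω ∈ 𝓝 p) (hu : ContinuousAt u p) {q : ℝ → X}
    (hq : Tendsto q (𝓝[>] 0) (𝓝 p)) (hqN : ∀ᶠ h in 𝓝[>] 0, q h ∈ N h) :
    Tendsto (fun h => uh h (q h)) (𝓝[>] 0) (𝓝 (u p)) := by
  refine Metric.tendsto_nhds.2 fun ε hε => ?_
  obtain ⟨r, hr, hball⟩ := Metric.nhds_basis_closedBall.mem_iff.1
    (inter_mem hΩ (hu (Metric.ball_mem_nhds _ (half_pos hε))))
  obtain ⟨h₀, hh₀, hconv⟩ := hcvg _ (isCompact_closedBall p r)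
    (fun x hx => (hball hx).1) _ (half_pos hε)
  have hsmall : ∀ᶠ h in 𝓝[>] (0 : ℝ), h < h₀ :=
    nhdsWithin_le_nhds (eventually_lt_nhds hh₀)
  filter_upwards [hqN, hsmall, self_mem_nhdsWithin, hq (Metric.closedBall_mem_nhds p hr)]
    with h hN hh₀ hpos hK
  have hu' : |u (q h) - u p| < ε / 2 := (hball hK).2
  calc dist (uh h (q h)) (u p) ≤ |uh h (q h) - u (q h)| + |u (q h) - u p| := abs_sub_le _ _ _
    _ < ε / 2 + ε / 2 := add_lt_add (hconv h hpos hh₀ _ ⟨hN, hK⟩) hu'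
    _ = ε := add_halves ε

def latticeFloor {d : ℕ} (h : ℝ) (v : Euc d) : Euc d := h • intVec (fun i => ⌊v i / h⌋)

theorem latticeFloor_apply {d : ℕ} (h : ℝ) (v : Euc d) (i : Fin d) :
    latticeFloor h v i = h * ⌊v i / h⌋ := by
  simp [latticeFloor, intVec]

theorem tendsto_latticeFloor_sub {d : ℕ} (v : ℝ → Euc d) :
    Tendsto (fun h => latticeFloor h (v h) - v h) (𝓝[>] 0) (𝓝 0) := by
  rw [(PiLp.homeomorph 2 _).isInducing.tendsto_nhds_iff, tendsto_pi_nhds]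
  intro i
  have hlow : Tendsto (fun h : ℝ => -h) (𝓝[>] 0) (𝓝 0) := by
    simpa using (continuous_neg.tendsto (0 : ℝ)).mono_left nhdsWithin_le_nhds
  refine tendsto_of_tendsto_of_tendsto_of_le_of_le' hlow tendsto_const_nhds ?_ ?_ <;>
    filter_upwards [self_mem_nhdsWithin] with h (hh : 0 < h)
  · change -h ≤ latticeFloor h (v h) i - v h i
    have := Int.lt_floor_add_one (v h i / h)
    rw [div_lt_iff₀ hh] at this
    rw [latticeFloor_apply]; linarith
  · change latticeFloor h (v h) i - v h i ≤ 0
    have := Int.floor_le (v h i / h)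
    rw [le_div_iff₀ hh] at this
    rw [latticeFloor_apply]; linarith

theorem latticeFloor_mem_latt {d : ℕ} (h : ℝ) (v : Euc d) : latticeFloor h v ∈ latt d h :=
  fun i => ⟨⌊v i / h⌋, by rw [latticeFloor_apply, mul_comm]⟩

theorem add_smul_intVec_mem_latt {d : ℕ} {h : ℝ} {x : Euc d} (hx : x ∈ latt d h)
    (e : Fin d → ℤ) : x + h • intVec e ∈ latt d h := fun i => by
  obtain ⟨m, hm⟩ := hx i
  exact ⟨m + e i, by simp [intVec, hm]; ring⟩

theorem intVec_neg {d : ℕ} (e : Fin d → ℤ) : intVec (-e) = -intVec e := by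
  ext i; simp [intVec]

theorem hev_eq_of_mem_closure {d : ℕ} {Ω : Set (Euc d)} {h : ℝ} (hh : 0 < h) {x : Euc d}
    {e : Fin d → ℤ} (hx : x + h • intVec e ∈ closure Ω) : hev Ω h x e = h := by
  have hub : ∀ t ∈ {t | ∃ r ∈ Icc (0 : ℝ) 1, t = r * h ∧ x + (r * h) • intVec e ∈ closure Ω},
      t ≤ h := by
    rintro t ⟨r, ⟨-, hr1⟩, rfl, -⟩
    nlinarith
  have hmem : h ∈ {t | ∃ r ∈ Icc (0 : ℝ) 1, t = r * h ∧ x + (r * h) • intVec e ∈ closure Ω} :=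
    ⟨1, right_mem_Icc.2 zero_le_one, (one_mul h).symm, by rwa [one_mul]⟩
  exact le_antisymm (csSup_le ⟨h, hmem⟩ hub) (le_csSup ⟨h, hub⟩ hmem)

theorem DiscConvex.le_midpoint {d : ℕ} {Ω : Set (Euc d)} {h : ℝ} {v : Euc d → ℝ}
    (hv : DiscConvex Ω h v) (hh : 0 < h) {x : Euc d} (hx : x ∈ meshΩ Ω h) (e : Fin d → ℤ)
    (hfwd : x + h • intVec e ∈ Ω) (hbwd : x + h • intVec (-e) ∈ Ω) :
    v x ≤ (v (x + h • intVec e) + v (x + h • intVec (-e))) / 2 := by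
  rcases eq_or_ne e 0 with rfl | he
  · have h0 : intVec (0 : Fin d → ℤ) = 0 := by ext; simp [intVec]
    simp [h0]
  have hΔ := hv x hx e he
  rw [deltaE, hev_eq_of_mem_closure hh (subset_closure hfwd),
    hev_eq_of_mem_closure hh (subset_closure hbwd), ← add_div] at hΔ
  have hsum := (mul_nonneg_iff_of_pos_left (by positivity : (0 : ℝ) < 2 / (h + h))).1 hΔ
  rw [le_div_iff₀ hh, zero_mul] at hsum
  linarith

theorem midpoint_le_of_discConvex_limit {d : ℕ} {Ω : Set (Euc d)} (hop : IsOpen Ω)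
    (hcv : Convex ℝ Ω)
    {uh : ℝ → Euc d → ℝ} (hdc : ∀ h : ℝ, 0 < h → DiscConvex Ω h (uh h))
    {u : Euc d → ℝ} (huc : ContinuousOn u Ω)
    (hcvg : ∀ K : Set (Euc d), IsCompact K → K ⊆ Ω → ∀ ε : ℝ, 0 < ε →
      ∃ h₀ : ℝ, 0 < h₀ ∧ ∀ h : ℝ, 0 < h → h < h₀ →
        ∀ x ∈ nodesAll Ω h ∩ K, |uh h x - u x| < ε)
    {y z : Euc d} (hy : y ∈ Ω) (hz : z ∈ Ω) :
    u (midpoint ℝ y z) ≤ (u y + u z) / 2 := by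
  have hlim : ∀ {q : ℝ → Euc d} {p : Euc d}, p ∈ Ω → Tendsto q (𝓝[>] 0) (𝓝 p) →
      (∀ h, q h ∈ latt d h) → Tendsto (fun h => uh h (q h)) (𝓝[>] 0) (𝓝 (u p)) :=
    fun hp hq hql => tendsto_apply_of_uniform_on_compacts hcvg (hop.mem_nhds hp)
      (huc.continuousAt (hop.mem_nhds hp)) hq
      ((hq.eventually_mem (hop.mem_nhds hp)).mono fun h hqh => Or.inl ⟨hqh, hql h⟩)
  set m := midpoint ℝ y z
  have hm : m ∈ Ω := hcv.midpoint_mem hy hz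
  set x : ℝ → Euc d := fun h => latticeFloor h m
  set e : ℝ → Fin d → ℤ := fun h i => ⌊(y - x h) i / h⌋
  have hx : Tendsto x (𝓝[>] 0) (𝓝 m) := by
    simpa using (tendsto_latticeFloor_sub fun _ => m).add_const m
  have hstep : Tendsto (fun h => h • intVec (e h)) (𝓝[>] 0) (𝓝 (y - m)) := by
    have := (tendsto_latticeFloor_sub fun h => y - x h).add
      ((tendsto_const_nhds : Tendsto (fun _ => y) _ (𝓝 y)).sub hx)
    rwa [funext fun _ => sub_add_cancel _ _, zero_add] at this
  have hfwd : Tendsto (fun h => x h + h • intVec (e h)) (𝓝[>] 0) (𝓝 y) := by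
    simpa using hx.add hstep
  have hbwd : Tendsto (fun h => x h + h • intVec (-e h)) (𝓝[>] 0) (𝓝 z) := by
    convert hx.sub hstep using 2
    · simp [intVec_neg, sub_eq_add_neg]
    · simp only [m, midpoint_eq_smul_add, invOf_eq_inv]; module
  have hlatt : ∀ h, x h ∈ latt d h := fun h => latticeFloor_mem_latt h m
  refine le_of_tendsto_of_tendsto (hlim hm hx hlatt)
    (((hlim hy hfwd fun h => add_smul_intVec_mem_latt (hlatt h) _).add
      (hlim hz hbwd fun h => add_smul_intVec_mem_latt (hlatt h) _)).div_const 2) ?_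
  filter_upwards [self_mem_nhdsWithin, hx.eventually_mem (hop.mem_nhds hm),
    hfwd.eventually_mem (hop.mem_nhds hy), hbwd.eventually_mem (hop.mem_nhds hz)]
    with h hh hxΩ hfΩ hbΩ
  exact (hdc h hh).le_midpoint hh ⟨hxΩ, hlatt h⟩ _ hfΩ hbΩ

theorem statement18_general {d : ℕ} (Ω : Set (Euc d))
    (hop : IsOpen Ω) (hcv : Convex ℝ Ω)
    (uh : ℝ → Euc d → ℝ)
    (hdc : ∀ h : ℝ, 0 < h → DiscConvex Ω h (uh h))
    (u : Euc d → ℝ) (huc : ContinuousOn u Ω)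
    (hcvg : ∀ K : Set (Euc d), IsCompact K → K ⊆ Ω → ∀ ε : ℝ, 0 < ε →
      ∃ h₀ : ℝ, 0 < h₀ ∧ ∀ h : ℝ, 0 < h → h < h₀ →
        ∀ x ∈ nodesAll Ω h ∩ K, |uh h x - u x| < ε) :
    ConvexOn ℝ Ω u :=
  convexOn_of_midpoint_le hcv huc fun _ hy _ hz =>
    midpoint_le_of_discConvex_limit hop hcv hdc huc hcvg hy hz

/-- if discrete convex mesh functions (with the full direction set
`e ∈ ℤ^d \ {0}`) converge uniformly on compact subsets of `Ω` to a continuous function `u`,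
then `u` is convex on `Ω`. -/
theorem statement18 {d : ℕ} (hd : 1 ≤ d) (Ω : Set (Euc d))
    (hne : Ω.Nonempty) (hbd : Bornology.IsBounded Ω) (hop : IsOpen Ω) (hcv : Convex ℝ Ω)
    (uh : ℝ → Euc d → ℝ)
    (hdc : ∀ h : ℝ, 0 < h → DiscConvex Ω h (uh h))
    (u : Euc d → ℝ) (huc : ContinuousOn u Ω)
    (hcvg : ∀ K : Set (Euc d), IsCompact K → K ⊆ Ω → ∀ ε : ℝ, 0 < ε →
      ∃ h₀ : ℝ, 0 < h₀ ∧ ∀ h : ℝ, 0 < h → h < h₀ →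
        ∀ x ∈ nodesAll Ω h ∩ K, |uh h x - u x| < ε) :
    ConvexOn ℝ Ω u :=
  statement18_general Ω hop hcv uh hdc u huc hcvg

end
end
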